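/- Consider the proximal gradient iteration θ_{k+1} = argmin_u { βJ(u) + (1/(2α))‖u − θ_k‖² + ∇l(θ_k)ᵀ(u − θ_k) } with constant stepsize α satisfying 1/α > max(2βζ, (1/8)‖X‖² + βζ), where J is a weakly convex sparsity inducing function with parameter ζ and l is the empirical logistic loss. Then the sequence of objective values l(θ_k) + βJ(θ_k) is monotonically non-increasing and convergent, and ‖θ_{k+1} − θ_k‖ → 0. -/

import Mathlib

/-!
Since the sigmoid is `1/4`-Lipschitz, the logistic loss satisfies the descent inequality
`l (θ + v) ≤ l θ + ⟪∇l θ, v⟫ + (1/8) ∑ᵢ ⟪v, xᵢ⟫² ≤ l θ + ⟪∇l θ, v⟫ + ‖X‖²/8 ‖v‖²`.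
Weak convexity of `F` makes the proximal subproblem `(1/α - 2βζ)`-strongly convex, so comparing
its minimiser `θₖ₊₁` with `θₖ` gives
`β J θₖ₊₁ + ⟪∇l θₖ, θₖ₊₁ - θₖ⟫ + (1/α - βζ) ‖θₖ₊₁ - θₖ‖² ≤ β J θₖ`.
Adding the two yields the sufficient decrease
`(l + βJ) θₖ₊₁ + (1/α - βζ - ‖X‖²/8) ‖θₖ₊₁ - θₖ‖² ≤ (l + βJ) θₖ`
with a positive coefficient; the objective is nonnegative, so it converges and the telescoping
gaps force `‖θₖ₊₁ - θₖ‖ → 0`.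
-/

open scoped RealInnerProductSpace BigOperators
open Filter

noncomputable def logisticLoss {d N : ℕ} (x : Fin N → EuclideanSpace ℝ (Fin d))
    (y : Fin N → ℝ) (θ : EuclideanSpace ℝ (Fin d)) : ℝ :=
  ∑ i, (Real.log (1 + Real.exp ⟪θ, x i⟫) - y i * ⟪θ, x i⟫)

open scoped NNReal Topology
open Set

theorem le_add_deriv_mul_add_sq_of_lipschitzWith {f f' : ℝ → ℝ} {K : ℝ≥0}
    (hf : ∀ t, HasDerivAt f (f' t) t) (hf' : LipschitzWith K f') (a h : ℝ) :
    f (a + h) ≤ f a + f' a * h + K / 2 * h ^ 2 := by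
  let φ : ℝ → ℝ := fun s => f (a + s * h) - s * (f' a * h) - K / 2 * h ^ 2 * s ^ 2
  have hφ : ∀ s, HasDerivAt φ (f' (a + s * h) * h - f' a * h - K * h ^ 2 * s) s := fun s => by
    have hline : HasDerivAt (fun s : ℝ => a + s * h) h s := (hasDerivAt_mul_const h).const_add a
    exact ((((hf _).comp s hline).sub (hasDerivAt_mul_const (f' a * h))).sub
      ((hasDerivAt_pow 2 s).const_mul (K / 2 * h ^ 2))).congr_deriv (by norm_num; ring)
  have hanti : AntitoneOn φ (Ici 0) := by
    refine antitoneOn_of_hasDerivWithinAt_nonpos (convex_Ici 0)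
      (HasDerivAt.continuousOn fun s _ => hφ s) (fun s _ => (hφ s).hasDerivWithinAt) ?_
    intro s hs
    rw [interior_Ici, mem_Ioi] at hs
    have hlip : |f' (a + s * h) - f' a| ≤ K * |s * h| := by
      simpa [Real.dist_eq] using hf'.dist_le_mul (a + s * h) a
    have hcross : (f' (a + s * h) - f' a) * h ≤ K * s * h ^ 2 := by
      calc (f' (a + s * h) - f' a) * h ≤ |f' (a + s * h) - f' a| * |h| := by
            rw [← abs_mul]; exact le_abs_self _
        _ ≤ K * |s * h| * |h| := by gcongr
        _ = K * s * h ^ 2 := by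
            rw [abs_mul, abs_of_pos hs, mul_assoc, mul_assoc, ← sq, sq_abs]; ring
    linarith
  have hend : φ 1 ≤ φ 0 := hanti (mem_Ici.2 le_rfl) (mem_Ici.2 zero_le_one) zero_le_one
  norm_num [φ] at hend
  linarith

theorem sum_inner_apply_single_sq_le {ι E : Type*} [Fintype ι] [DecidableEq ι]
    [NormedAddCommGroup E] [InnerProductSpace ℝ E] [CompleteSpace E]
    (A : EuclideanSpace ℝ ι →L[ℝ] E) (v : E) :
    ∑ i, ⟪v, A (EuclideanSpace.single i 1)⟫ ^ 2 ≤ ‖A‖ ^ 2 * ‖v‖ ^ 2 := by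
  have hcoord : ∀ i, (ContinuousLinearMap.adjoint A v) i = ⟪v, A (EuclideanSpace.single i 1)⟫ :=
    fun i => by
      rw [real_inner_comm, ← ContinuousLinearMap.adjoint_inner_right,
        EuclideanSpace.inner_single_left]
      simp
  calc ∑ i, ⟪v, A (EuclideanSpace.single i 1)⟫ ^ 2 = ‖ContinuousLinearMap.adjoint A v‖ ^ 2 := by
        simp only [EuclideanSpace.real_norm_sq_eq, hcoord]
    _ ≤ (‖A‖ * ‖v‖) ^ 2 := by
        gcongr
        simpa using (ContinuousLinearMap.adjoint A).le_opNorm v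
    _ = ‖A‖ ^ 2 * ‖v‖ ^ 2 := mul_pow _ _ _

theorem UniformConvexOn.add_le_of_isMinOn {E : Type*} [NormedAddCommGroup E] [NormedSpace ℝ E]
    {s : Set E} {φ : ℝ → ℝ} {f : E → ℝ} {w u : E}
    (hf : UniformConvexOn s φ f) (hw : IsMinOn f s w) (hws : w ∈ s) (hus : u ∈ s) :
    f w + φ ‖w - u‖ ≤ f u := by
  have hlim : Tendsto (fun t : ℝ => f w + (1 - t) * φ ‖w - u‖) (𝓝[>] 0)
      (𝓝 (f w + φ ‖w - u‖)) := by
    have : Continuous fun t : ℝ => f w + (1 - t) * φ ‖w - u‖ := by fun_prop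
    simpa using (this.tendsto 0).mono_left nhdsWithin_le_nhds
  refine le_of_tendsto hlim ?_
  filter_upwards [Ioo_mem_nhdsGT one_pos] with t ht
  have hmix := hf.2 hws hus (sub_nonneg.2 ht.2.le) ht.1.le (sub_add_cancel 1 t)
  have hmin : f w ≤ f _ := hw (hf.1 hws hus (sub_nonneg.2 ht.2.le) ht.1.le (sub_add_cancel 1 t))
  simp only [smul_eq_mul] at hmix
  have : t * (f w + (1 - t) * φ ‖w - u‖) ≤ t * f u := by linarith
  exact le_of_mul_le_mul_left this ht.1

theorem antitone_and_tendsto_of_add_mul_sq_le {a r : ℕ → ℝ} {c : ℝ} (hc : 0 < c)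
    (hdec : ∀ k, a (k + 1) + c * r k ^ 2 ≤ a k) (hr : ∀ k, 0 ≤ r k) (ha : BddBelow (range a)) :
    Antitone a ∧ (∃ l, Tendsto a atTop (𝓝 l)) ∧ Tendsto r atTop (𝓝 0) := by
  have hanti : Antitone a := antitone_nat_of_succ_le fun k => by nlinarith [hdec k]
  have hlim := tendsto_atTop_ciInf hanti ha
  refine ⟨hanti, ⟨_, hlim⟩, ?_⟩
  have hgap : Tendsto (fun k => Real.sqrt ((a k - a (k + 1)) / c)) atTop (𝓝 0) := by
    simpa using ((hlim.sub (hlim.comp (tendsto_add_atTop_nat 1))).div_const c).sqrt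
  refine squeeze_zero hr (fun k => Real.le_sqrt_of_sq_le ?_) hgap
  rw [le_div_iff₀ hc]
  linarith [hdec k]

theorem Real.hasDerivAt_log_one_add_exp (s : ℝ) :
    HasDerivAt (fun s => Real.log (1 + Real.exp s)) (Real.sigmoid s) s := by
  convert ((Real.hasDerivAt_exp s).const_add 1).log (by positivity) using 1
  rw [Real.sigmoid_def, Real.exp_neg]
  field_simp
  ring

theorem Real.lipschitzWith_sigmoid : LipschitzWith 4⁻¹ Real.sigmoid := by
  refine lipschitzWith_of_nnnorm_deriv_le differentiable_sigmoid fun s => ?_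
  rw [← NNReal.coe_le_coe, coe_nnnorm, Real.deriv_sigmoid, Real.norm_eq_abs,
    abs_of_nonneg (mul_nonneg (Real.sigmoid_nonneg s) (sub_nonneg.2 (Real.sigmoid_le_one s)))]
  push_cast
  nlinarith [sq_nonneg (Real.sigmoid s - 1 / 2)]

theorem Real.log_one_add_exp_add_le (a h : ℝ) :
    Real.log (1 + Real.exp (a + h)) ≤
      Real.log (1 + Real.exp a) + Real.sigmoid a * h + h ^ 2 / 8 := by
  have := le_add_deriv_mul_add_sq_of_lipschitzWith Real.hasDerivAt_log_one_add_exp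
    Real.lipschitzWith_sigmoid a h
  norm_num at this
  linarith

section Logistic

variable {d N : ℕ} (x : Fin N → EuclideanSpace ℝ (Fin d)) (y : Fin N → ℝ)

theorem logisticLoss_nonneg (hy : ∀ i, y i = 0 ∨ y i = 1) (θ : EuclideanSpace ℝ (Fin d)) :
    0 ≤ logisticLoss x y θ := by
  refine Finset.sum_nonneg fun i _ => ?_
  have hexp : Real.exp ⟪θ, x i⟫ ≤ 1 + Real.exp ⟪θ, x i⟫ := by linarith
  rcases hy i with h | h <;> rw [h]
  · simpa using Real.log_nonneg (by linarith [Real.exp_pos ⟪θ, x i⟫])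
  · simpa using Real.log_le_log (Real.exp_pos _) hexp

theorem hasDerivAt_logisticLoss_add_smul (θ v : EuclideanSpace ℝ (Fin d)) :
    HasDerivAt (fun t : ℝ => logisticLoss x y (θ + t • v))
      (∑ i, (Real.sigmoid ⟪θ, x i⟫ - y i) * ⟪v, x i⟫) 0 := by
  simp only [logisticLoss, inner_add_left, real_inner_smul_left]
  refine HasDerivAt.fun_sum fun i _ => ?_
  have hline : HasDerivAt (fun t : ℝ => ⟪θ, x i⟫ + t * ⟪v, x i⟫) ⟪v, x i⟫ 0 :=
    (hasDerivAt_mul_const _).const_add _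
  have hsoftplus := (Real.hasDerivAt_log_one_add_exp (⟪θ, x i⟫ + 0 * ⟪v, x i⟫)).comp 0 hline
  exact (hsoftplus.sub (hline.const_mul (y i))).congr_deriv (by rw [zero_mul, add_zero]; ring)

theorem inner_eq_of_hasGradientAt_logisticLoss {θ g : EuclideanSpace ℝ (Fin d)}
    (hg : HasGradientAt (logisticLoss x y) g θ) (v : EuclideanSpace ℝ (Fin d)) :
    ⟪g, v⟫ = ∑ i, (Real.sigmoid ⟪θ, x i⟫ - y i) * ⟪v, x i⟫ := by
  have hline : HasDerivAt (fun t : ℝ => θ + t • v) v 0 := by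
    simpa using ((hasDerivAt_id (0 : ℝ)).smul_const v).const_add θ
  have hcomp := (by simpa using hg.hasFDerivAt : HasFDerivAt (logisticLoss x y)
    (InnerProductSpace.toDual ℝ _ g) (θ + (0 : ℝ) • v)).comp_hasDerivAt (0 : ℝ) hline
  exact hcomp.unique (hasDerivAt_logisticLoss_add_smul x y θ v)

theorem logisticLoss_add_le {θ g : EuclideanSpace ℝ (Fin d)}
    (hg : HasGradientAt (logisticLoss x y) g θ) (v : EuclideanSpace ℝ (Fin d)) :
    logisticLoss x y (θ + v) ≤ logisticLoss x y θ + ⟪g, v⟫ + (1 / 8) * ∑ i, ⟪v, x i⟫ ^ 2 := by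
  rw [inner_eq_of_hasGradientAt_logisticLoss x y hg, Finset.mul_sum, logisticLoss, logisticLoss,
    ← Finset.sum_add_distrib, ← Finset.sum_add_distrib]
  refine Finset.sum_le_sum fun i _ => ?_
  rw [inner_add_left]
  linarith [Real.log_one_add_exp_add_le ⟪θ, x i⟫ ⟪v, x i⟫]

end Logistic

/-- The subproblem solved by `θₖ₊₁`, with `p = θₖ` and `q = ∇l θₖ`. -/
noncomputable def proxObjective {ι : Type*} [Fintype ι] (F : ℝ → ℝ) (β α : ℝ)
    (p q z : EuclideanSpace ℝ ι) : ℝ :=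
  β * ∑ j, F (z j) + 1 / (2 * α) * ‖z - p‖ ^ 2 + ⟪q, z - p⟫

theorem strongConvexOn_proxObjective {ι : Type*} [Fintype ι] {F : ℝ → ℝ} {ζ β : ℝ}
    (hH : ConvexOn ℝ univ (fun t => F t + ζ * t ^ 2)) (hβ : 0 ≤ β) (α : ℝ)
    (p q : EuclideanSpace ℝ ι) :
    StrongConvexOn univ (1 / α - 2 * β * ζ) (proxObjective F β α p q) := by
  have hsum : ConvexOn ℝ univ fun z : EuclideanSpace ℝ ι => ∑ j, (F (z j) + ζ * z j ^ 2) := by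
    refine ⟨convex_univ, fun z₁ _ z₂ _ a b ha hb hab => ?_⟩
    simp only [smul_eq_mul, Finset.mul_sum, ← Finset.sum_add_distrib, PiLp.add_apply,
      PiLp.smul_apply]
    exact Finset.sum_le_sum fun j _ => hH.2 (mem_univ _) (mem_univ _) ha hb hab
  have haffine : ConvexOn ℝ univ fun z : EuclideanSpace ℝ ι =>
      ⟪q - (1 / α) • p, z⟫ + (1 / (2 * α) * ‖p‖ ^ 2 - ⟪q, p⟫) :=
    ((innerSL ℝ (q - (1 / α) • p)).toLinearMap.convexOn convex_univ).add_const _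
  rw [strongConvexOn_iff_convex]
  refine ((hsum.smul hβ).add haffine).congr fun z _ => ?_
  simp only [Pi.add_apply, proxObjective, smul_eq_mul, Finset.sum_add_distrib, ← Finset.mul_sum]
  rw [norm_sub_sq_real, EuclideanSpace.real_norm_sq_eq z, inner_sub_left, inner_sub_right,
    real_inner_smul_left, real_inner_comm p z]
  ring

theorem objective_add_le_of_isMinOn_proxObjective {d N : ℕ}
    {x : Fin N → EuclideanSpace ℝ (Fin d)} {y : Fin N → ℝ} {F : ℝ → ℝ} {ζ β α : ℝ}
    (hH : ConvexOn ℝ univ (fun t => F t + ζ * t ^ 2)) (hβ : 0 ≤ β)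
    {X : Matrix (Fin d) (Fin N) ℝ} (hX : ∀ i j, X j i = x i j)
    {θ θ' g : EuclideanSpace ℝ (Fin d)} (hg : HasGradientAt (logisticLoss x y) g θ)
    (hmin : IsMinOn (proxObjective F β α θ g) univ θ') :
    logisticLoss x y θ' + β * ∑ j, F (θ' j) +
        (1 / α - β * ζ - ‖LinearMap.toContinuousLinearMap (Matrix.toEuclideanLin X)‖ ^ 2 / 8) *
          ‖θ' - θ‖ ^ 2 ≤
      logisticLoss x y θ + β * ∑ j, F (θ j) := by
  set A := LinearMap.toContinuousLinearMap (Matrix.toEuclideanLin X)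
  have hcolumn : ∀ i, A (EuclideanSpace.single i 1) = x i := fun i => by
    ext j
    simp [A, Matrix.toLpLin_apply, hX]
  have hsmooth := logisticLoss_add_le x y hg (θ' - θ)
  rw [add_sub_cancel] at hsmooth
  have hgram := sum_inner_apply_single_sq_le A (θ' - θ)
  simp only [hcolumn] at hgram
  have hprox := (strongConvexOn_proxObjective hH hβ α θ g).add_le_of_isMinOn hmin
    (mem_univ θ') (mem_univ θ)
  simp only [proxObjective, sub_self, norm_zero, inner_zero_right] at hprox
  rw [show 1 / (2 * α) = 1 / α / 2 by ring] at hprox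
  linarith

theorem prox_grad_convergence_general {d N : ℕ}
    (x : Fin N → EuclideanSpace ℝ (Fin d)) (y : Fin N → ℝ)
    (hy : ∀ i, y i = 0 ∨ y i = 1)
    (F : ℝ → ℝ) (ζ : ℝ)
    (hnonneg : ∀ t, 0 ≤ F t)
    (hH : ConvexOn ℝ Set.univ (fun t => F t + ζ * t ^ 2))
    (β : ℝ) (hβ : 0 < β)
    (g : EuclideanSpace ℝ (Fin d) → EuclideanSpace ℝ (Fin d))
    (hg : ∀ θ, HasGradientAt (logisticLoss x y) (g θ) θ)
    (X : Matrix (Fin d) (Fin N) ℝ) (hX : ∀ i j, X j i = x i j)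
    (α : ℝ)
    (hstep : 1 / α > max (2 * β * ζ)
      ((1 / 8) * ‖LinearMap.toContinuousLinearMap (Matrix.toEuclideanLin X)‖ ^ 2 + β * ζ))
    (θ : ℕ → EuclideanSpace ℝ (Fin d))
    (hiter : ∀ k, ∀ u : EuclideanSpace ℝ (Fin d),
      β * (∑ j, F (θ (k + 1) j)) + (1 / (2 * α)) * ‖θ (k + 1) - θ k‖ ^ 2 +
          ⟪g (θ k), θ (k + 1) - θ k⟫ ≤
        β * (∑ j, F (u j)) + (1 / (2 * α)) * ‖u - θ k‖ ^ 2 + ⟪g (θ k), u - θ k⟫) :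
    Antitone (fun k => logisticLoss x y (θ k) + β * ∑ j, F (θ k j)) ∧
      (∃ c : ℝ, Tendsto (fun k => logisticLoss x y (θ k) + β * ∑ j, F (θ k j))
        atTop (nhds c)) ∧
      Tendsto (fun k => ‖θ (k + 1) - θ k‖) atTop (nhds 0) := by
  have hdecrease : 0 < 1 / α - β * ζ -
      ‖LinearMap.toContinuousLinearMap (Matrix.toEuclideanLin X)‖ ^ 2 / 8 := by
    linarith [(le_max_right _ _).trans_lt hstep]
  have hbdd : BddBelow (range fun k => logisticLoss x y (θ k) + β * ∑ j, F (θ k j)) :=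
    ⟨0, forall_mem_range.2 fun k => add_nonneg (logisticLoss_nonneg x y hy (θ k))
      (mul_nonneg hβ.le (Finset.sum_nonneg fun j _ => hnonneg _))⟩
  exact antitone_and_tendsto_of_add_mul_sq_le hdecrease
    (fun k => objective_add_le_of_isMinOn_proxObjective hH hβ.le hX (hg (θ k))
      (isMinOn_univ_iff.2 (hiter k)))
    (fun k => norm_nonneg _) hbdd

theorem prox_grad_convergence {d N : ℕ}
    (x : Fin N → EuclideanSpace ℝ (Fin d)) (y : Fin N → ℝ)
    (hy : ∀ i, y i = 0 ∨ y i = 1)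
    (F : ℝ → ℝ) (ζ : ℝ) (hζ : 0 < ζ)
    (hnonneg : ∀ t, 0 ≤ F t)
    (heven : ∀ t, F (-t) = F t)
    (h0 : F 0 = 0)
    (hmono : MonotoneOn F (Set.Ici 0))
    (hratio : AntitoneOn (fun t => F t / t) (Set.Ioi 0))
    (hH : ConvexOn ℝ Set.univ (fun t => F t + ζ * t ^ 2))
    (β : ℝ) (hβ : 0 < β)
    (g : EuclideanSpace ℝ (Fin d) → EuclideanSpace ℝ (Fin d))
    (hg : ∀ θ, HasGradientAt (logisticLoss x y) (g θ) θ)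
    (X : Matrix (Fin d) (Fin N) ℝ) (hX : ∀ i j, X j i = x i j)
    (α : ℝ) (hα : 0 < α)
    (hstep : 1 / α > max (2 * β * ζ)
      ((1 / 8) * ‖LinearMap.toContinuousLinearMap (Matrix.toEuclideanLin X)‖ ^ 2 + β * ζ))
    (θ : ℕ → EuclideanSpace ℝ (Fin d))
    (hiter : ∀ k, ∀ u : EuclideanSpace ℝ (Fin d),
      β * (∑ j, F (θ (k + 1) j)) + (1 / (2 * α)) * ‖θ (k + 1) - θ k‖ ^ 2 +
          ⟪g (θ k), θ (k + 1) - θ k⟫ ≤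
        β * (∑ j, F (u j)) + (1 / (2 * α)) * ‖u - θ k‖ ^ 2 + ⟪g (θ k), u - θ k⟫) :
    Antitone (fun k => logisticLoss x y (θ k) + β * ∑ j, F (θ k j)) ∧
      (∃ c : ℝ, Tendsto (fun k => logisticLoss x y (θ k) + β * ∑ j, F (θ k j))
        atTop (nhds c)) ∧
      Tendsto (fun k => ‖θ (k + 1) - θ k‖) atTop (nhds 0) :=
  prox_grad_convergence_general x y hy F ζ hnonneg hH β hβ g hg X hX α hstep θ hiter
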